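/- Let T: 𝕋 → 𝕋 be continuous such that for a partition 0 = x₀ < x₁ < ⋯ < x_d = 1, T is monotone increasing on each [x_k, x_{k+1}), T(x_k) = 0, and T(x) → 1 as x → x_{k+1}⁻. Let ι: 𝕋 → {0,…,d−1}^ℕ be the itinerary map, ι(x)_n = k iff Tⁿ(x) ∈ [x_k, x_{k+1}). If I ∈ {0,…,d−1}^ℕ does not terminate in an infinite string of (d−1)'s, then there exists x ∈ [0,1) with ι(x) = I. -/

import Mathlib

open Set Filter MeasureTheory

noncomputable def rep (z : UnitAddCircle) : ℝ := (AddCircle.equivIco 1 0 z : ℝ)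

def MinimalOn (T : UnitAddCircle → UnitAddCircle) (X : Set UnitAddCircle) : Prop :=
  ∀ x ∈ X, ∀ y ∈ X, y ∈ closure {z : UnitAddCircle | ∃ n : ℕ, T^[n] x = z}

def PreservesCyclicOrder (T : UnitAddCircle → UnitAddCircle) (X : Set UnitAddCircle) : Prop :=
  ∀ p ∈ X, ∀ q ∈ X, ∀ r ∈ X,
    T p ≠ T q → T q ≠ T r → T r ≠ T p →
    sbtw p q r → sbtw (T p) (T q) (T r)

def IsRotational (T : UnitAddCircle → UnitAddCircle) (X : Set UnitAddCircle) : Prop :=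
  IsClosed X ∧ Set.MapsTo T X X ∧ MinimalOn T X ∧ PreservesCyclicOrder T X


/-! Let `f r = rep (T r)` be the lift of `T` to `[0, 1)`. Each `[x k, x (k+1))` is a full branch
of `f`: it is mapped monotonically and continuously onto `[0, 1)`, starting at `0` and tending to
`1` (continuity is forced by continuity of `T` together with monotonicity). Full branches
compose: inside a full branch `[a, b)` of `g`, the points that `g` sends into a full branch of `f`
form an interval `[α, β)` on which `f ∘ g` is a full branch, and `β < b` unless the branch of `f`
ends at `1`. So the cylinder of the first `n` letters of `I` is a full branch `[a n, b n)` of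
`f^[n]`; these intervals are nested, and since infinitely many letters differ from `d - 1` the
right endpoints drop infinitely often, so `⨆ n, a n` lies in all of them. -/

open Topology

lemma rep_mem (z : UnitAddCircle) : rep z ∈ Ico (0 : ℝ) 1 := by
  simpa [rep] using (AddCircle.equivIco 1 0 z).2

@[simp]
lemma coe_rep (z : UnitAddCircle) : ((rep z : ℝ) : UnitAddCircle) = z :=
  AddCircle.coe_equivIco

lemma rep_coe {r : ℝ} (hr : r ∈ Ico (0 : ℝ) 1) : rep r = r :=
  AddCircle.equivIco_coe_of_mem (by simpa using hr)

@[simp]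
lemma rep_zero : rep 0 = 0 := by
  simpa using rep_coe (r := 0) (by simp)

lemma coe_injOn_Ico : InjOn ((↑) : ℝ → UnitAddCircle) (Ico 0 1) := fun r hr s hs h =>
  (AddCircle.coe_eq_coe_iff_of_mem_Ico (p := 1) (a := 0) (by simpa using hr)
    (by simpa using hs)).1 h

lemma eq_of_tendsto_of_continuousAt_coe {F : ℝ → ℝ} {l : Filter ℝ} [l.NeBot] {r₀ L : ℝ}
    (hF : ContinuousAt (fun r => (F r : UnitAddCircle)) r₀) (hl : l ≤ 𝓝 r₀)
    (hF₀ : F r₀ ∈ Ico 0 1) (hL : L ∈ Ico 0 1) (h : Tendsto F l (𝓝 L)) : L = F r₀ :=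
  coe_injOn_Ico hL hF₀ <| tendsto_nhds_unique
    (((AddCircle.continuous_mk' 1).tendsto L).comp h) (hF.tendsto.mono_left hl)

lemma continuousOn_Ico_of_monotoneOn_of_continuous_coe {F : ℝ → ℝ} {u v : ℝ}
    (hF : Continuous fun r => (F r : UnitAddCircle)) (hF01 : MapsTo F (Ico u v) (Ico 0 1))
    (hmono : MonotoneOn F (Ico u v)) : ContinuousOn F (Ico u v) := by
  intro r₀ hr₀
  have hF₀ := hF01 hr₀
  rw [continuousWithinAt_iff_continuous_left'_right']
  constructor
  · rcases hr₀.1.eq_or_lt with rfl | hur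
    · simp [ContinuousWithinAt]
    have hsub : Ioo u r₀ ⊆ Ico u v := fun s hs => ⟨hs.1.le, hs.2.trans hr₀.2⟩
    have hlim := (hmono.mono hsub).tendsto_nhdsWithin_Ioo_left (nonempty_Ioo.2 hur)
      ⟨F r₀, forall_mem_image.2 fun s hs => hmono (hsub hs) hr₀ hs.2.le⟩
    have hL := isClosed_Icc.mem_of_tendsto hlim <| eventually_of_mem (Ioo_mem_nhdsLT hur)
      fun s hs => (⟨(hF01 (hsub hs)).1, hmono (hsub hs) hr₀ hs.2.le⟩ : F s ∈ Icc 0 (F r₀))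
    rw [eq_of_tendsto_of_continuousAt_coe hF.continuousAt nhdsWithin_le_nhds hF₀
      ⟨hL.1, hL.2.trans_lt hF₀.2⟩ hlim] at hlim
    exact hlim.mono_left (nhdsWithin_mono _ inter_subset_right)
  · obtain ⟨s₁, hr₀s₁, hs₁v⟩ := exists_between hr₀.2
    have hs₁ : s₁ ∈ Ico u v := ⟨hr₀.1.trans hr₀s₁.le, hs₁v⟩
    have hsub : Ioo r₀ s₁ ⊆ Ico u v := fun s hs => ⟨hr₀.1.trans hs.1.le, hs.2.trans hs₁v⟩
    have hlim := (hmono.mono hsub).tendsto_nhdsWithin_Ioo_right (nonempty_Ioo.2 hr₀s₁)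
      ⟨F r₀, forall_mem_image.2 fun s hs => hmono hr₀ (hsub hs) hs.1.le⟩
    have hL := isClosed_Icc.mem_of_tendsto hlim <| eventually_of_mem (Ioo_mem_nhdsGT hr₀s₁)
      fun s hs => (⟨hmono hr₀ (hsub hs) hs.1.le, hmono (hsub hs) hs₁ hs.2.le⟩ :
        F s ∈ Icc (F r₀) (F s₁))
    rw [eq_of_tendsto_of_continuousAt_coe hF.continuousAt nhdsWithin_le_nhds hF₀
      ⟨hF₀.1.trans hL.1, hL.2.trans_lt (hF01 hs₁).2⟩ hlim] at hlim
    exact hlim.mono_left (nhdsWithin_mono _ inter_subset_right)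

structure IsFullBranch (g : ℝ → ℝ) (a b : ℝ) : Prop where
  lt : a < b
  monotoneOn : MonotoneOn g (Ico a b)
  continuousOn : ContinuousOn g (Ico a b)
  mapsTo : MapsTo g (Ico a b) (Ico 0 1)
  map_left : g a = 0
  tendsto_left_right : Tendsto g (𝓝[<] b) (𝓝 1)

namespace IsFullBranch

variable {f g : ℝ → ℝ} {a b u v w : ℝ}

lemma exists_sep_lt_eq_Ico (hg : IsFullBranch g a b) (hw₀ : 0 ≤ w) (hw₁ : w < 1) :
    ∃ c ∈ Ico a b, g c = w ∧ {r ∈ Ico a b | g r < w} = Ico a c := by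
  obtain ⟨r₁, hwr₁, hr₁⟩ :=
    ((hg.tendsto_left_right.eventually (eventually_gt_nhds hw₁)).and (Ioo_mem_nhdsLT hg.lt)).exists
  have hsub : Icc a r₁ ⊆ Ico a b := Icc_subset_Ico_right hr₁.2
  set K := Icc a r₁ ∩ g ⁻¹' Ici w
  have hK : IsCompact K := isCompact_Icc.of_isClosed_subset
    ((hg.continuousOn.mono hsub).preimage_isClosed_of_isClosed isClosed_Icc isClosed_Ici)
    inter_subset_left
  obtain ⟨c, ⟨hc, hwc⟩, hcK⟩ := hK.exists_isLeast ⟨r₁, ⟨⟨hr₁.1.le, le_rfl⟩, hwr₁.le⟩⟩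
  -- `c` is the least point of `K`, and the intermediate value theorem on `[a, c]` puts a point
  -- of `K` with `g = w` below it
  obtain ⟨s, hs, hgs⟩ := intermediate_value_Icc hc.1 (hg.continuousOn.mono
    ((Icc_subset_Icc_right hc.2).trans hsub)) ⟨hg.map_left ▸ hw₀, hwc⟩
  have hcs : c = s := le_antisymm (hcK ⟨⟨hs.1, hs.2.trans hc.2⟩, hgs.ge⟩) hs.2
  refine ⟨c, hsub hc, hcs ▸ hgs, ?_⟩
  ext r
  refine ⟨fun ⟨hr, hgr⟩ => ⟨hr.1, not_le.1 fun hcr => ?_⟩, fun hr => ⟨?_, not_le.1 fun hwr => ?_⟩⟩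
  · exact hgr.not_ge ((hcs ▸ hgs).ge.trans (hg.monotoneOn (hsub hc) hr hcr))
  · exact ⟨hr.1, hr.2.trans (hc.2.trans_lt hr₁.2)⟩
  · exact hr.2.not_ge (hcK ⟨⟨hr.1, hr.2.le.trans hc.2⟩, hwr⟩)

lemma exists_sep_lt_eq_Ico_of_pos (hg : IsFullBranch g a b) (hw₀ : 0 < w) (hw₁ : w ≤ 1) :
    ∃ c ∈ Ioc a b, (w < 1 → c < b) ∧ {r ∈ Ico a b | g r < w} = Ico a c ∧
      Tendsto g (𝓝[<] c) (𝓝[<] w) := by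
  suffices h : ∃ c ∈ Ioc a b, (w < 1 → c < b) ∧ {r ∈ Ico a b | g r < w} = Ico a c ∧
      Tendsto g (𝓝[<] c) (𝓝 w) by
    obtain ⟨c, hc, hcb, heq, hlim⟩ := h
    refine ⟨c, hc, hcb, heq, tendsto_nhdsWithin_iff.2 ⟨hlim, ?_⟩⟩
    filter_upwards [Ioo_mem_nhdsLT hc.1] with r hr
    exact (heq.symm ▸ Ioo_subset_Ico_self hr : r ∈ {r ∈ Ico a b | g r < w}).2
  rcases hw₁.lt_or_eq with hw₁ | rfl
  · obtain ⟨c, hc, hgc, heq⟩ := hg.exists_sep_lt_eq_Ico hw₀.le hw₁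
    have hac : a < c :=
      (heq ▸ ⟨left_mem_Ico.2 hg.lt, hg.map_left.trans_lt hw₀⟩ : a ∈ Ico a c).2
    refine ⟨c, ⟨hac, hc.2.le⟩, fun _ => hc.2, heq, ?_⟩
    have hcont := (hg.continuousOn c hc).mono (Ico_subset_Ico_right hc.2.le)
    rwa [ContinuousWithinAt, nhdsWithin_Ico_eq_nhdsLT hac, hgc] at hcont
  · refine ⟨b, ⟨hg.lt, le_rfl⟩, fun h => absurd h (lt_irrefl 1), ?_, hg.tendsto_left_right⟩
    exact sep_eq_self_iff_mem_true.2 fun r hr => (hg.mapsTo hr).2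

lemma comp (hf : IsFullBranch f u v) (hg : IsFullBranch g a b) (hu : 0 ≤ u) (hv : v ≤ 1) :
    ∃ α β, IsFullBranch (f ∘ g) α β ∧ {r ∈ Ico a b | g r ∈ Ico u v} = Ico α β ∧
      (v < 1 → β < b) := by
  obtain ⟨α, hα, hgα, hαeq⟩ := hg.exists_sep_lt_eq_Ico hu (hf.lt.trans_le hv)
  obtain ⟨β, hβ, hβb, hβeq, hβlim⟩ := hg.exists_sep_lt_eq_Ico_of_pos (hu.trans_lt hf.lt) hv
  have hsep : {r ∈ Ico a b | g r ∈ Ico u v} = Ico α β := by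
    ext r
    have hu' := Set.ext_iff.1 hαeq r
    have hv' := Set.ext_iff.1 hβeq r
    simp only [mem_Ico] at hu' hv' ⊢
    constructor
    · rintro ⟨hr, hur, hrv⟩
      exact ⟨not_lt.1 fun h => (hu'.2 ⟨hr.1, h⟩).2.not_ge hur, (hv'.1 ⟨hr, hrv⟩).2⟩
    · rintro ⟨hαr, hrβ⟩
      have hr : a ≤ r ∧ r < b := ⟨hα.1.trans hαr, hrβ.trans_le hβ.2⟩
      exact ⟨hr, not_lt.1 fun h => (hu'.1 ⟨hr, h⟩).2.not_ge hαr, (hv'.2 ⟨hr.1, hrβ⟩).2⟩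
  have hmem : ∀ r ∈ Ico α β, r ∈ Ico a b ∧ g r ∈ Ico u v := by
    rw [← hsep]; exact fun r hr => hr
  have hαβ : α < β := by
    have hα' : α ∈ Ico α β := hsep ▸ ⟨hα, hgα.symm ▸ left_mem_Ico.2 hf.lt⟩
    exact hα'.2
  refine ⟨α, β, ⟨hαβ, ?_, ?_, ?_, ?_, hf.tendsto_left_right.comp hβlim⟩, hsep, hβb⟩
  · exact hf.monotoneOn.comp (hg.monotoneOn.mono fun r hr => (hmem r hr).1)
      fun r hr => (hmem r hr).2
  · exact hf.continuousOn.comp (hg.continuousOn.mono fun r hr => (hmem r hr).1)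
      fun r hr => (hmem r hr).2
  · exact hf.mapsTo.comp fun r hr => (hmem r hr).2
  · simp [hgα, hf.map_left]

end IsFullBranch

theorem Monotone.ciSup_mem_iInter_Ico_of_antitone {α β : Type*} [ConditionallyCompleteLattice α]
    [Preorder β] [IsDirectedOrder β] {a b : β → α} (ha : Monotone a) (hb : Antitone b)
    (hab : a ≤ b) (hdrop : ∀ n, ∃ m, b m < b n) : (⨆ n, a n) ∈ ⋂ n, Ico (a n) (b n) := by
  have hIcc := mem_iInter.1 (ha.ciSup_mem_iInter_Icc_of_antitone hb hab)
  refine mem_iInter.2 fun n => ?_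
  obtain ⟨m, hm⟩ := hdrop n
  exact ⟨(hIcc n).1, (hIcc m).2.trans_lt hm⟩

-- The cylinder `A_J` of the first `n` letters `J`, the `m`-th letter standing for `[u m, v m)`.
def itineraryCylinder (f : ℝ → ℝ) (u v : ℕ → ℝ) (n : ℕ) : Set ℝ :=
  {r ∈ Ico 0 1 | ∀ m < n, f^[m] r ∈ Ico (u m) (v m)}

section ItineraryCylinder

variable {f : ℝ → ℝ} {u v : ℕ → ℝ}

@[simp]
lemma itineraryCylinder_zero : itineraryCylinder f u v 0 = Ico 0 1 := by
  simp only [itineraryCylinder, Nat.not_lt_zero, IsEmpty.forall_iff, implies_true, sep_true]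

lemma itineraryCylinder_succ (n : ℕ) :
    itineraryCylinder f u v (n + 1) = {r ∈ itineraryCylinder f u v n | f^[n] r ∈ Ico (u n) (v n)} := by
  ext r
  simp only [itineraryCylinder, mem_sep_iff, Nat.forall_lt_succ_right, and_assoc]

lemma exists_isFullBranch_itineraryCylinder (hf : ∀ n, IsFullBranch f (u n) (v n)) (hu : ∀ n, 0 ≤ u n)
    (hv : ∀ n, v n ≤ 1) (n : ℕ) : ∃ a b, IsFullBranch f^[n] a b ∧ itineraryCylinder f u v n = Ico a b := by
  induction n with
  | zero =>
    exact ⟨0, 1, ⟨zero_lt_one, monotoneOn_id, continuousOn_id, mapsTo_id _, rfl,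
      tendsto_nhdsWithin_of_tendsto_nhds tendsto_id⟩, itineraryCylinder_zero⟩
  | succ n ih =>
    obtain ⟨a, b, hab, hC⟩ := ih
    obtain ⟨α, β, hαβ, hsep, -⟩ := (hf n).comp hab (hu n) (hv n)
    exact ⟨α, β, Function.iterate_succ' f n ▸ hαβ, by rw [itineraryCylinder_succ, hC, hsep]⟩

theorem exists_forall_iterate_mem_Ico (hf : ∀ n, IsFullBranch f (u n) (v n))
    (hu : ∀ n, 0 ≤ u n) (hv : ∀ n, v n ≤ 1) (hv₁ : ∀ N, ∃ n ≥ N, v n < 1) :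
    ∃ r ∈ Ico 0 1, ∀ n, f^[n] r ∈ Ico (u n) (v n) := by
  choose a b hab hC using exists_isFullBranch_itineraryCylinder hf hu hv
  have hnest : ∀ n, a n ≤ a (n + 1) ∧ b (n + 1) ≤ b n := fun n => by
    rw [← Ico_subset_Ico_iff (hab (n + 1)).lt, ← hC, ← hC, itineraryCylinder_succ]
    exact sep_subset _ _
  have hb : Antitone b := antitone_nat_of_succ_le fun n => (hnest n).2
  have hdrop : ∀ n, v n < 1 → b (n + 1) < b n := fun n hvn => by
    obtain ⟨α, β, -, hsep, hβ⟩ := (hf n).comp (hab n) (hu n) (hv n)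
    have hIco : Ico (a (n + 1)) (b (n + 1)) = Ico α β := by rw [← hC, itineraryCylinder_succ, hC, hsep]
    rw [((Ico_eq_Ico_iff (Or.inl (hab _).lt)).1 hIco).2]
    exact hβ hvn
  have hA := (monotone_nat_of_le_succ fun n => (hnest n).1).ciSup_mem_iInter_Ico_of_antitone hb
    (fun n => (hab n).lt.le) fun n => by
      obtain ⟨m, hmn, hm⟩ := hv₁ n
      exact ⟨m + 1, (hdrop m hm).trans_le (hb hmn)⟩
  have hAC : ∀ n, (⨆ n, a n) ∈ itineraryCylinder f u v n := fun n => (hC n).symm ▸ mem_iInter.1 hA n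
  refine ⟨⨆ n, a n, itineraryCylinder_zero (f := f) (u := u) (v := v) ▸ hAC 0, fun n => ?_⟩
  have hn := hAC (n + 1)
  rw [itineraryCylinder_succ] at hn
  exact hn.2

end ItineraryCylinder

theorem itinerary_realization_general
    (d : ℕ)
    (x : Fin (d + 1) → ℝ) (hxmono : StrictMono x)
    (hx0 : x 0 = 0) (hx1 : x (Fin.last d) = 1)
    (T : UnitAddCircle → UnitAddCircle) (hT : Continuous T)
    (hTmono : ∀ k : Fin d, ∀ r s : ℝ,
        r ∈ Set.Ico (x k.castSucc) (x k.succ) → s ∈ Set.Ico (x k.castSucc) (x k.succ) →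
        r ≤ s → rep (T ((r : ℝ) : UnitAddCircle)) ≤ rep (T ((s : ℝ) : UnitAddCircle)))
    (hT0 : ∀ k : Fin d, T ((x k.castSucc : ℝ) : UnitAddCircle) = 0)
    (hT1 : ∀ k : Fin d, Tendsto (fun r : ℝ => rep (T ((r : ℝ) : UnitAddCircle)))
        (nhdsWithin (x k.succ) (Set.Iio (x k.succ))) (nhds 1))
    (ι : UnitAddCircle → ℕ → Fin d)
    (hι : ∀ z : UnitAddCircle, ∀ n : ℕ, ∀ kk : Fin d,
        ι z n = kk ↔ rep (T^[n] z) ∈ Set.Ico (x kk.castSucc) (x kk.succ))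
    (I : ℕ → Fin d) (hI : ∀ N : ℕ, ∃ n ≥ N, ((I n : ℕ) ≠ d - 1)) :
    ∃ z : UnitAddCircle, ι z = I := by
  set f : ℝ → ℝ := fun r => rep (T r)
  have hsemi : Function.Semiconj rep T f := fun z => by simp [f]
  have hbranch (k : Fin d) : IsFullBranch f (x k.castSucc) (x k.succ) :=
    { lt := hxmono Fin.castSucc_lt_succ
      monotoneOn := fun _ hr _ hs => hTmono k _ _ hr hs
      continuousOn := continuousOn_Ico_of_monotoneOn_of_continuous_coe
        (by simp only [f, coe_rep]; exact hT.comp (AddCircle.continuous_mk' 1))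
        (fun _ _ => rep_mem _) fun _ hr _ hs => hTmono k _ _ hr hs
      mapsTo := fun _ _ => rep_mem _
      map_left := by simp [f, hT0 k]
      tendsto_left_right := hT1 k }
  have hx_nonneg (k : Fin (d + 1)) : 0 ≤ x k := hx0 ▸ hxmono.monotone (Fin.zero_le k)
  have hx_le_one (k : Fin (d + 1)) : x k ≤ 1 := hx1 ▸ hxmono.monotone (Fin.le_last k)
  have hI₁ (N : ℕ) : ∃ n ≥ N, x (I n).succ < 1 := by
    obtain ⟨n, hnN, hn⟩ := hI N
    exact ⟨n, hnN, hx1 ▸ hxmono (Fin.lt_def.2 (by simp; omega))⟩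
  obtain ⟨r, hr, hrI⟩ := exists_forall_iterate_mem_Ico (fun n => hbranch (I n))
    (fun _ => hx_nonneg _) (fun _ => hx_le_one _) hI₁
  refine ⟨r, funext fun n => (hι _ n _).2 ?_⟩
  rw [hsemi.iterate_right n, rep_coe hr]
  exact hrI n

theorem itinerary_realization
    (d : ℕ) (hd : 0 < d)
    (x : Fin (d + 1) → ℝ) (hxmono : StrictMono x)
    (hx0 : x 0 = 0) (hx1 : x (Fin.last d) = 1)
    (T : UnitAddCircle → UnitAddCircle) (hT : Continuous T)
    (hTmono : ∀ k : Fin d, ∀ r s : ℝ,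
        r ∈ Set.Ico (x k.castSucc) (x k.succ) → s ∈ Set.Ico (x k.castSucc) (x k.succ) →
        r ≤ s → rep (T ((r : ℝ) : UnitAddCircle)) ≤ rep (T ((s : ℝ) : UnitAddCircle)))
    (hT0 : ∀ k : Fin d, T ((x k.castSucc : ℝ) : UnitAddCircle) = 0)
    (hT1 : ∀ k : Fin d, Tendsto (fun r : ℝ => rep (T ((r : ℝ) : UnitAddCircle)))
        (nhdsWithin (x k.succ) (Set.Iio (x k.succ))) (nhds 1))
    (ι : UnitAddCircle → ℕ → Fin d)
    (hι : ∀ z : UnitAddCircle, ∀ n : ℕ, ∀ kk : Fin d,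
        ι z n = kk ↔ rep (T^[n] z) ∈ Set.Ico (x kk.castSucc) (x kk.succ))
    (I : ℕ → Fin d) (hI : ∀ N : ℕ, ∃ n ≥ N, ((I n : ℕ) ≠ d - 1)) :
    ∃ z : UnitAddCircle, ι z = I :=
  itinerary_realization_general d x hxmono hx0 hx1 T hT hTmono hT0 hT1 ι hι I hI
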